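/- Let n ≥ 1, μ ∈ ℝ^n, let Σ ∈ ℝ^{n×n} be a symmetric positive semidefinite matrix, and let ρ be a Borel measure on [0,∞)^n \ {0} satisfying ∫ min(‖t‖,1) ρ(dt) < ∞. Define, for θ ∈ ℝ^n, Ψ(θ) = ∫ (exp(i⟨θ, t⋄μ⟩ − ½‖θ‖²_{t⋄Σ}) − 1) ρ(dt) and Ψ*(θ) = ∫ (exp(−½‖θ‖²_{t⋄Σ}) − 1) ρ(dt). Then both integrals converge absolutely and Re Ψ(θ) ≤ Ψ*(θ) for all θ ∈ ℝ^n. -/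

import Mathlib

open MeasureTheory Complex

noncomputable section

/-- Euclidean inner product on `ℝ^n`. -/
def dot {n : ℕ} (x y : Fin n → ℝ) : ℝ := ∑ k, x k * y k

/-- Quadratic form `‖θ‖²_A = θ A θᵀ`. -/
def quad {n : ℕ} (A : Matrix (Fin n) (Fin n) ℝ) (θ : Fin n → ℝ) : ℝ :=
  ∑ k, ∑ l, θ k * A k l * θ l

/-- Outer product `t ⋄ μ` of vectors, `(t ⋄ μ)_k = t_k μ_k`. -/
def diaV {n : ℕ} (t μ : Fin n → ℝ) : Fin n → ℝ := fun k => t k * μ k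

/-- Outer product `t ⋄ Σ` of a vector and a matrix, `(t ⋄ Σ)_{kl} = Σ_{kl} min(t_k, t_l)`. -/
def diaM {n : ℕ} (t : Fin n → ℝ) (A : Matrix (Fin n) (Fin n) ℝ) :
    Matrix (Fin n) (Fin n) ℝ := Matrix.of fun k l => A k l * min (t k) (t l)

/-! For `t ≥ 0` the matrix `(min (t k) (t l))` is the Gram matrix of the indicators of `(0, t k]`
in `L²`, so by the Schur product theorem `t ⋄ Σ` is positive semidefinite. Hence the exponent
`z(t) = i⟨θ, t ⋄ μ⟩ - ½‖θ‖²_{t⋄Σ}` has `Re z ≤ 0` for `ρ`-a.e. `t`, and since `|z(t)| = O(‖t‖)`,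
both `|e^z - 1| ≤ 2 min(|z|, 1)` and `|e^{Re z} - 1|` are dominated by a multiple of
`min(‖t‖, 1)`, which is `ρ`-integrable. Finally `Re (e^z - 1) ≤ |e^z| - 1 = e^{Re z} - 1`. -/

open Matrix in
theorem posSemidef_matrix_min {ι : Type*} [Finite ι] {t : ι → ℝ} (ht : ∀ k, 0 ≤ t k) :
    (of fun k l => min (t k) (t l)).PosSemidef := by
  convert posSemidef_matrix_measure_inter (μ := volume)
    (fun k => measurableSet_Ioc (a := 0) (b := t k)) (fun _ => measure_Ioc_lt_top.ne) using 1
  ext k l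
  simp [Set.Ioc_inter_Ioc, ht k, ht l]

theorem posSemidef_diaM {n : ℕ} {S : Matrix (Fin n) (Fin n) ℝ} (hS : S.PosSemidef)
    {t : Fin n → ℝ} (ht : ∀ k, 0 ≤ t k) : (diaM t S).PosSemidef :=
  hS.hadamard (posSemidef_matrix_min ht)

theorem Matrix.PosSemidef.quad_nonneg {n : ℕ} {A : Matrix (Fin n) (Fin n) ℝ} (hA : A.PosSemidef)
    (θ : Fin n → ℝ) : 0 ≤ quad A θ := by
  simpa [quad, dotProduct, Matrix.mulVec, Finset.mul_sum, mul_assoc] using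
    hA.dotProduct_mulVec_nonneg θ

theorem continuous_dot_diaV {n : ℕ} (θ μ : Fin n → ℝ) : Continuous fun t => dot θ (diaV t μ) := by
  unfold dot diaV; fun_prop

theorem continuous_quad_diaM {n : ℕ} (S : Matrix (Fin n) (Fin n) ℝ) (θ : Fin n → ℝ) :
    Continuous fun t => quad (diaM t S) θ := by
  unfold quad diaM; simp only [Matrix.of_apply]; fun_prop

theorem abs_le_sqrt_sum_sq {ι : Type*} [Fintype ι] (t : ι → ℝ) (k : ι) :
    |t k| ≤ √(∑ i, t i ^ 2) :=
  Real.abs_le_sqrt (Finset.single_le_sum (fun i _ => sq_nonneg (t i)) (Finset.mem_univ k))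

theorem abs_dot_diaV_le {n : ℕ} (θ μ t : Fin n → ℝ) :
    |dot θ (diaV t μ)| ≤ (∑ k, |θ k * μ k|) * √(∑ k, t k ^ 2) := by
  rw [Finset.sum_mul]
  refine (Finset.abs_sum_le_sum_abs _ _).trans (Finset.sum_le_sum fun k _ => ?_)
  rw [diaV, show θ k * (t k * μ k) = θ k * μ k * t k by ring, abs_mul]
  exact mul_le_mul_of_nonneg_left (abs_le_sqrt_sum_sq t k) (abs_nonneg _)

theorem abs_quad_diaM_le {n : ℕ} (S : Matrix (Fin n) (Fin n) ℝ) (θ t : Fin n → ℝ) :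
    |quad (diaM t S) θ| ≤ (∑ k, ∑ l, |θ k * S k l * θ l|) * √(∑ k, t k ^ 2) := by
  simp only [Finset.sum_mul]
  refine (Finset.abs_sum_le_sum_abs _ _).trans (Finset.sum_le_sum fun k _ =>
    (Finset.abs_sum_le_sum_abs _ _).trans (Finset.sum_le_sum fun l _ => ?_))
  rw [diaM, Matrix.of_apply, show θ k * (S k l * min (t k) (t l)) * θ l
    = θ k * S k l * θ l * min (t k) (t l) by ring, abs_mul]
  refine mul_le_mul_of_nonneg_left ?_ (abs_nonneg _)
  exact abs_min_le_max_abs_abs.trans (max_le (abs_le_sqrt_sum_sq t k) (abs_le_sqrt_sum_sq t l))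

theorem norm_I_mul_dot_diaV_sub_quad_diaM_le {n : ℕ} (μ : Fin n → ℝ)
    (S : Matrix (Fin n) (Fin n) ℝ) (θ t : Fin n → ℝ) :
    ‖I * (dot θ (diaV t μ) : ℂ) - (quad (diaM t S) θ : ℂ) / 2‖ ≤
      (∑ k, |θ k * μ k| + (∑ k, ∑ l, |θ k * S k l * θ l|) / 2) * √(∑ k, t k ^ 2) := by
  have hsplit : ‖I * (dot θ (diaV t μ) : ℂ) - (quad (diaM t S) θ : ℂ) / 2‖ ≤
      |dot θ (diaV t μ)| + |quad (diaM t S) θ| / 2 := by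
    refine (norm_sub_le _ _).trans ?_
    simp [Complex.norm_real]
  linarith [abs_dot_diaV_le θ μ t, abs_quad_diaM_le S θ t]

theorem Complex.re_I_mul_sub_div_two (a q : ℝ) : (I * a - q / 2 : ℂ).re = -q / 2 := by
  simp [neg_div]

theorem Complex.norm_exp_sub_one_le_two_mul_min {z : ℂ} (hz : z.re ≤ 0) :
    ‖exp z - 1‖ ≤ 2 * min ‖z‖ 1 := by
  rcases le_total ‖z‖ 1 with h | h
  · rw [min_eq_left h]
    exact norm_exp_sub_one_le h
  · rw [min_eq_right h]
    calc ‖exp z - 1‖ ≤ ‖exp z‖ + ‖(1 : ℂ)‖ := norm_sub_le _ _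
      _ ≤ 2 := by rw [norm_exp, norm_one]; linarith [Real.exp_le_one_iff.2 hz]
      _ = 2 * 1 := by ring

theorem Complex.re_exp_sub_one_le (z : ℂ) : (exp z - 1).re ≤ Real.exp z.re - 1 := by
  rw [sub_re, one_re, ← norm_exp]
  exact sub_le_sub_right (re_le_norm _) 1

theorem min_mul_le_max_mul_min {C r : ℝ} (hr : 0 ≤ r) : min (C * r) 1 ≤ max C 1 * min r 1 := by
  rcases le_total r 1 with h | h
  · rw [min_eq_left h]
    exact (min_le_left _ _).trans (mul_le_mul_of_nonneg_right (le_max_left _ _) hr)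
  · rw [min_eq_right h, mul_one]
    exact (min_le_right _ _).trans (le_max_right _ _)

theorem integrable_exp_sub_one_of_norm_le {α : Type*} [MeasurableSpace α] {ρ : Measure α}
    {f : α → ℂ} {r : α → ℝ} {C : ℝ} (hf : AEStronglyMeasurable f ρ)
    (hre : ∀ᵐ t ∂ρ, (f t).re ≤ 0) (hr : ∀ t, 0 ≤ r t) (hfr : ∀ t, ‖f t‖ ≤ C * r t)
    (hr1 : Integrable (fun t => min (r t) 1) ρ) :
    Integrable (fun t => Complex.exp (f t) - 1) ρ := by
  refine (hr1.const_mul (2 * max C 1)).mono' (by fun_prop) ?_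
  filter_upwards [hre] with t ht
  calc ‖Complex.exp (f t) - 1‖ ≤ 2 * min ‖f t‖ 1 := Complex.norm_exp_sub_one_le_two_mul_min ht
    _ ≤ 2 * min (C * r t) 1 := by gcongr; exact hfr t
    _ ≤ 2 * (max C 1 * min (r t) 1) := by gcongr; exact min_mul_le_max_mul_min (hr t)
    _ = 2 * max C 1 * min (r t) 1 := by ring

theorem integrable_exp_re_sub_one_of_norm_le {α : Type*} [MeasurableSpace α] {ρ : Measure α}
    {f : α → ℂ} {r : α → ℝ} {C : ℝ} (hf : AEStronglyMeasurable f ρ)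
    (hre : ∀ᵐ t ∂ρ, (f t).re ≤ 0) (hr : ∀ t, 0 ≤ r t) (hfr : ∀ t, ‖f t‖ ≤ C * r t)
    (hr1 : Integrable (fun t => min (r t) 1) ρ) :
    Integrable (fun t => Real.exp (f t).re - 1) ρ := by
  have h := integrable_exp_sub_one_of_norm_le (f := fun t => ((f t).re : ℂ)) (C := C) (by fun_prop)
    (by simpa using hre) hr (fun t => ?_) hr1
  · simpa [← Complex.ofReal_exp] using h.re
  · rw [Complex.norm_real, Real.norm_eq_abs]
    exact (Complex.abs_re_le_norm (f t)).trans (hfr t)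

theorem stmt0 {n : ℕ} (μ : Fin n → ℝ)
    (S : Matrix (Fin n) (Fin n) ℝ) (hS : S.PosSemidef)
    (ρ : Measure (Fin n → ℝ))
    (hsupp : ρ {t | ¬ ((∀ k, 0 ≤ t k) ∧ t ≠ 0)} = 0)
    (hmom : ∫⁻ t, ENNReal.ofReal (min (Real.sqrt (∑ k, (t k) ^ 2)) 1) ∂ρ < ⊤) :
    ∀ θ : Fin n → ℝ,
      Integrable (fun t => Complex.exp (Complex.I * (dot θ (diaV t μ) : ℂ) -
          (quad (diaM t S) θ : ℂ) / 2) - 1) ρ ∧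
      Integrable (fun t => Real.exp (-(quad (diaM t S) θ) / 2) - 1) ρ ∧
      (∫ t, (Complex.exp (Complex.I * (dot θ (diaV t μ) : ℂ) -
          (quad (diaM t S) θ : ℂ) / 2) - 1) ∂ρ).re ≤
        ∫ t, (Real.exp (-(quad (diaM t S) θ) / 2) - 1) ∂ρ := by
  intro θ
  have hq : ∀ᵐ t ∂ρ, 0 ≤ quad (diaM t S) θ := by
    filter_upwards [ae_iff.mpr hsupp] with t ht
    exact (posSemidef_diaM hS ht.1).quad_nonneg θ
  have hr1 : Integrable (fun t => min (√(∑ k, t k ^ 2)) 1) ρ :=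
    ⟨(by fun_prop : Continuous _).aestronglyMeasurable,
      (hasFiniteIntegral_iff_ofReal (.of_forall fun t => by positivity)).2 hmom⟩
  have hexp : Continuous fun t => I * (dot θ (diaV t μ) : ℂ) - (quad (diaM t S) θ : ℂ) / 2 := by
    have := continuous_dot_diaV θ μ
    have := continuous_quad_diaM S θ
    fun_prop
  have hre : ∀ᵐ t ∂ρ, (I * (dot θ (diaV t μ) : ℂ) - (quad (diaM t S) θ : ℂ) / 2).re ≤ 0 :=
    hq.mono fun t ht => by rw [re_I_mul_sub_div_two]; linarith
  have hF := integrable_exp_sub_one_of_norm_le hexp.aestronglyMeasurable hre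
    (fun t => Real.sqrt_nonneg _) (norm_I_mul_dot_diaV_sub_quad_diaM_le μ S θ) hr1
  have hG := integrable_exp_re_sub_one_of_norm_le hexp.aestronglyMeasurable hre
    (fun t => Real.sqrt_nonneg _) (norm_I_mul_dot_diaV_sub_quad_diaM_le μ S θ) hr1
  simp only [re_I_mul_sub_div_two] at hG
  refine ⟨hF, hG, (integral_re hF).symm.trans_le ?_⟩
  refine integral_mono hF.re hG fun t => ?_
  have h := Complex.re_exp_sub_one_le (I * (dot θ (diaV t μ) : ℂ) - (quad (diaM t S) θ : ℂ) / 2)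
  rwa [re_I_mul_sub_div_two] at h
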